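/- arXiv:2604.04124 — 3 statements merged into one kernel-verified Lean document; each statement's English description precedes it below -/
import Mathlib

section
/- Let r ≥ 2 and let G and G' be two connected undirected graphs on the vertex set {1,…,r}, each having exactly r−1 edges (i.e., two trees on {1,…,r}). Then Π_{{α,β} ∈ E(G)} O_f^{(2)}(X_α, X_β) ≡ Π_{{α,β} ∈ E(G')} O_f^{(2)}(X_α, X_β) Mod f(*); that is, the product of rank-two Weil operators over the edges of a spanning tree, taken modulo the ideal (f(X_1),…,f(X_r)), does not depend on the choice of tree. -/
/-!
Since `O(x, y) (X_x - X_y) = f(X_x) - f(X_y)` and `X_y - X_z` divides `O(x, y) - O(x, z)`, every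
"triangle" satisfies `O(x, y) O(y, z) ≡ O(x, z) O(y, z)`: an edge `{x, y}` may be slid along an
adjacent edge `{y, z}`. Root a spanning tree at `o` and write its edges as `{v, p v}` with `p` the
parent map. Sliding each edge towards the root, one step at a time, turns the tree into the star
centred at `o`, so every spanning tree gives the star product modulo `f(*)`.
-/

open Finset MvPolynomial

/-- The rank-two Weil operator `O_g^{(2)}(X_a, X_b) = ∑_{j=1}^{deg g} b_j ∑_{α+β=j-1} X_a^α X_b^β`. -/
noncomputable def weilO2 {F : Type*} [Field F] {σ : Type*} (g : Polynomial F) (a b : σ) :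
    MvPolynomial σ F :=
  ∑ j ∈ Finset.range g.natDegree,
    MvPolynomial.C (g.coeff (j + 1)) *
      ∑ pr ∈ Finset.HasAntidiagonal.antidiagonal j, MvPolynomial.X a ^ pr.1 * MvPolynomial.X b ^ pr.2

theorem SimpleGraph.Connected.exists_adj_dist_lt {V : Type*} {G : SimpleGraph V}
    (hG : G.Connected) {o v : V} (hv : v ≠ o) : ∃ u, G.Adj v u ∧ G.dist u o < G.dist v o := by
  have hdist : G.dist v o ≠ 0 :=
    SimpleGraph.dist_ne_zero_iff_ne_and_reachable.mpr ⟨hv, hG.preconnected v o⟩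
  obtain ⟨q, hq⟩ := SimpleGraph.exists_walk_of_dist_ne_zero hdist
  cases q with
  | nil => exact absurd rfl hv
  | cons hadj q =>
    refine ⟨_, hadj, ?_⟩
    have := SimpleGraph.dist_le q
    simp only [SimpleGraph.Walk.length_cons] at hq
    omega

section TreeProduct

variable {V : Type*} [Fintype V] [DecidableEq V] {M : Type*} [CommMonoid M]

theorem prod_erase_update_grandparent (w : V → V → M) (hw : ∀ x y z, w x y * w y z = w x z * w y z)
    {o v : V} {p : V → V} (hv : v ≠ o) (hpv : p v ≠ o) (hvp : p v ≠ v) :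
    ∏ u ∈ univ.erase o, w u (Function.update p v (p (p v)) u) = ∏ u ∈ univ.erase o, w u (p u) := by
  have hvs : v ∈ univ.erase o := by simpa using hv
  have hpvs : p v ∈ (univ.erase o).erase v := by simp [hpv, hvp]
  rw [← mul_prod_erase _ (fun u => w u (Function.update p v (p (p v)) u)) hvs,
    ← mul_prod_erase _ (fun u => w u (p u)) hvs, Function.update_self,
    prod_congr rfl fun u hu => by rw [Function.update_of_ne (ne_of_mem_erase hu)],
    ← mul_prod_erase _ (fun u => w u (p u)) hpvs, ← mul_assoc, ← mul_assoc, hw]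

theorem prod_erase_parent_eq_prod_erase_root (w : V → V → M)
    (hw : ∀ x y z, w x y * w y z = w x z * w y z) (o : V) (p : V → V) (d : V → ℕ)
    (hd : ∀ v ≠ o, d (p v) < d v) :
    ∏ v ∈ univ.erase o, w v (p v) = ∏ v ∈ univ.erase o, w v o := by
  induction hm : ∑ v ∈ univ.erase o, d (p v) using Nat.strong_induction_on generalizing p with
  | _ m ih =>
  by_cases! hroot : ∀ v ∈ univ.erase o, p v = o
  · exact prod_congr rfl fun v hv => by rw [hroot v hv]
  obtain ⟨v, hvs, hpv⟩ := hroot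
  have hv : v ≠ o := ne_of_mem_erase hvs
  set p' := Function.update p v (p (p v))
  have hd' : ∀ u ≠ o, d (p' u) < d u := by
    intro u hu
    rcases eq_or_ne u v with rfl | huv
    · simpa [p'] using (hd _ hpv).trans (hd _ hu)
    · simpa [p', huv] using hd u hu
  have hlt : ∑ u ∈ univ.erase o, d (p' u) < m := by
    refine hm ▸ sum_lt_sum (fun u _ => ?_) ⟨v, hvs, by simpa [p'] using hd _ hpv⟩
    rcases eq_or_ne u v with rfl | huv
    · simpa [p'] using (hd _ hpv).le
    · simp [p', huv]
  rw [← prod_erase_update_grandparent w hw hv hpv (fun h => (hd v hv).ne (congrArg d h)),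
    ih _ hlt p' hd' rfl]

theorem SimpleGraph.prod_edgeFinset_eq_prod_erase_parent {G : SimpleGraph V} [DecidableRel G.Adj]
    (φ : Sym2 V → M) (o : V) (p : V → V) (d : V → ℕ) (hadj : ∀ v ≠ o, G.Adj v (p v))
    (hd : ∀ v ≠ o, d (p v) < d v) (hcard : #G.edgeFinset = Fintype.card V - 1) :
    ∏ e ∈ G.edgeFinset, φ e = ∏ v ∈ univ.erase o, φ s(v, p v) := by
  have hinj : Set.InjOn (fun v => s(v, p v)) (univ.erase o) := by
    intro v hv u hu h
    rcases Sym2.eq_iff.mp h with ⟨h, -⟩ | ⟨rfl, hpp⟩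
    · exact h
    · have := (hd _ (ne_of_mem_erase hv)).trans (hd _ (ne_of_mem_erase hu))
      rw [hpp] at this
      exact absurd this (lt_irrefl _)
  have himage : (univ.erase o).image (fun v => s(v, p v)) = G.edgeFinset := by
    refine eq_of_subset_of_card_le (fun e he => ?_) ?_
    · obtain ⟨v, hv, rfl⟩ := mem_image.mp he
      exact G.mem_edgeFinset.mpr (hadj v (ne_of_mem_erase hv))
    · rw [card_image_of_injOn hinj, hcard, card_erase_of_mem (mem_univ o), card_univ]
  rw [← himage, prod_image hinj]

end TreeProduct

section WeilOperator

variable {F : Type*} [Field F] {σ : Type*}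

/-- The ideal of the congruence `Mod f(*)`. -/
noncomputable abbrev spanAevalX (f : Polynomial F) : Ideal (MvPolynomial σ F) :=
  Ideal.span (Set.range fun i : σ => Polynomial.aeval (X i : MvPolynomial σ F) f)

theorem weilO2_comm (g : Polynomial F) (x y : σ) : weilO2 g x y = weilO2 g y x := by
  unfold weilO2
  refine sum_congr rfl fun j _ => congrArg _ ?_
  rw [← HasAntidiagonal.map_swap_antidiagonal, sum_map]
  simp [mul_comm]

theorem weilO2_mul_X_sub_X (g : Polynomial F) (x y : σ) :
    weilO2 g x y * (X x - X y) =
      Polynomial.aeval (X x : MvPolynomial σ F) g -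
        Polynomial.aeval (X y : MvPolynomial σ F) g := by
  rw [Polynomial.aeval_eq_sum_range, Polynomial.aeval_eq_sum_range, ← sum_sub_distrib,
    sum_range_succ', pow_zero, pow_zero, sub_self, add_zero, weilO2, sum_mul]
  refine sum_congr rfl fun j _ => ?_
  have hgeom := geom_sum₂_mul (X x : MvPolynomial σ F) (X y) (j + 1)
  rw [Nat.add_sub_cancel] at hgeom
  rw [mul_assoc, Nat.sum_antidiagonal_eq_sum_range_succ (fun k l => X x ^ k * X y ^ l), hgeom,
    ← smul_sub, smul_eq_C_mul]

theorem X_sub_X_dvd_weilO2_sub (g : Polynomial F) (x y z : σ) :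
    (X y - X z : MvPolynomial σ F) ∣ weilO2 g x y - weilO2 g x z := by
  simp only [weilO2, ← sum_sub_distrib, ← mul_sub]
  exact dvd_sum fun j _ => (dvd_sum fun pr _ => (sub_dvd_pow_sub_pow _ _ _).mul_left _).mul_left _

theorem mk_weilO2_mul_weilO2 (f : Polynomial F) (x y z : σ) :
    Ideal.Quotient.mk (spanAevalX f) (weilO2 f x y) * Ideal.Quotient.mk _ (weilO2 f y z) =
      Ideal.Quotient.mk _ (weilO2 f x z) * Ideal.Quotient.mk _ (weilO2 f y z) := by
  rw [← map_mul, ← map_mul, Ideal.Quotient.eq, ← sub_mul]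
  obtain ⟨q, hq⟩ := X_sub_X_dvd_weilO2_sub f x y z
  rw [hq, mul_right_comm, mul_comm (X y - X z), weilO2_mul_X_sub_X, sub_mul]
  exact sub_mem (Ideal.mul_mem_right _ _ (Ideal.subset_span ⟨y, rfl⟩))
    (Ideal.mul_mem_right _ _ (Ideal.subset_span ⟨z, rfl⟩))

theorem mk_prod_edgeFinset_weilO2 [Fintype σ] [DecidableEq σ] (f : Polynomial F)
    {G : SimpleGraph σ} [DecidableRel G.Adj] (hG : G.Connected)
    (hcard : #G.edgeFinset = Fintype.card σ - 1) (a b : Sym2 σ → σ)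
    (hab : ∀ e : Sym2 σ, e = s(a e, b e)) (o : σ) :
    Ideal.Quotient.mk (spanAevalX f) (∏ e ∈ G.edgeFinset, weilO2 f (a e) (b e)) =
      Ideal.Quotient.mk _ (∏ v ∈ univ.erase o, weilO2 f v o) := by
  choose! p hadj hlt using fun v (hv : v ≠ o) => hG.exists_adj_dist_lt hv
  have hlift (e : Sym2 σ) : weilO2 f (a e) (b e) = Sym2.lift ⟨weilO2 f, weilO2_comm f⟩ e := by
    conv_rhs => rw [hab e]
    rfl
  simp only [hlift, G.prod_edgeFinset_eq_prod_erase_parent _ o p (G.dist · o) hadj hlt hcard,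
    map_prod]
  exact prod_erase_parent_eq_prod_erase_root _ (mk_weilO2_mul_weilO2 f) o p (G.dist · o) hlt

end WeilOperator

theorem weil_operator_tree_independence_general {F : Type*} [Field F]
    (f : Polynomial F)
    (r : ℕ)
    (G G' : SimpleGraph (Fin r)) [DecidableRel G.Adj] [DecidableRel G'.Adj]
    (hG : G.Connected) (hG' : G'.Connected)
    (hGcard : G.edgeFinset.card = r - 1) (hG'card : G'.edgeFinset.card = r - 1)
    (a b : Sym2 (Fin r) → Fin r) (hab : ∀ e : Sym2 (Fin r), e = Sym2.mk (a e) (b e)) :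
    (∏ e ∈ G.edgeFinset, weilO2 f (a e) (b e))
      - (∏ e ∈ G'.edgeFinset, weilO2 f (a e) (b e))
      ∈ Ideal.span (Set.range fun i : Fin r =>
          Polynomial.aeval (MvPolynomial.X i : MvPolynomial (Fin r) F) f) := by
  obtain ⟨o⟩ := hG.nonempty
  rw [← Ideal.Quotient.eq, mk_prod_edgeFinset_weilO2 f hG (by rwa [Fintype.card_fin]) a b hab o,
    mk_prod_edgeFinset_weilO2 f hG' (by rwa [Fintype.card_fin]) a b hab o]

/-- Let `r ≥ 2` and let `G`, `G'` be two connected undirected graphs on the vertex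
set `{1,…,r}`, each with exactly `r-1` edges (i.e. two trees).  Then
`∏_{{α,β} ∈ E(G)} O_f^{(2)}(X_α, X_β) ≡ ∏_{{α,β} ∈ E(G')} O_f^{(2)}(X_α, X_β) Mod f(*)`.
Each unordered edge `e` is written as `e = s(a e, b e)` via a fixed choice of representatives
`a, b` (the factor is well defined since `O_f^{(2)}` is symmetric in its two arguments). -/
theorem weil_operator_tree_independence {F : Type*} [Field F] [Fintype F]
    (f : Polynomial F) (hf : f.Monic) (n : ℕ) (hn : f.natDegree = n) (hn1 : 1 ≤ n)
    (r : ℕ) (hr : 2 ≤ r)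
    (G G' : SimpleGraph (Fin r)) [DecidableRel G.Adj] [DecidableRel G'.Adj]
    (hG : G.Connected) (hG' : G'.Connected)
    (hGcard : G.edgeFinset.card = r - 1) (hG'card : G'.edgeFinset.card = r - 1)
    (a b : Sym2 (Fin r) → Fin r) (hab : ∀ e : Sym2 (Fin r), e = Sym2.mk (a e) (b e)) :
    (∏ e ∈ G.edgeFinset, weilO2 f (a e) (b e))
      - (∏ e ∈ G'.edgeFinset, weilO2 f (a e) (b e))
      ∈ Ideal.span (Set.range fun i : Fin r =>
          Polynomial.aeval (MvPolynomial.X i : MvPolynomial (Fin r) F) f) :=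
  weil_operator_tree_independence_general f r G G' hG hG' hGcard hG'card a b hab
end

section
/- Suppose f = m·n is a product of two monic polynomials m, n ∈ 𝔽_q[t]. Let r ≥ 2 and let l ∈ {1,…,r−1}. Then, modulo the ideal of 𝔽_q[X_1,…,X_r] generated by f(X_1),…,f(X_r), one has Π_{j=1}^{r−1} O_f^{(2)}(X_j, X_r) ≡ m(X_l)·O_n^{(2)}(X_l, X_r)·Π_{j∈{1,…,r−1}, j≠l} O_f^{(2)}(X_j, X_r) + (Π_{j∈{1,…,r}, j≠l} n(X_j))·Π_{j=1}^{r−1} O_m^{(2)}(X_j, X_r). -/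
open Finset MvPolynomial

/-!
Multiplying by `X_a - X_b` turns `O_g^{(2)}(X_a, X_b)` into `g(X_a) - g(X_b)`, which yields the
Leibniz rule `O_{mn}(X_a, X_b) = n(X_a) O_m(X_a, X_b) + m(X_b) O_n(X_a, X_b)` for `a ≠ b`.
Expand the `l`-th factor of `∏_j O_f(X_j, X_r)` by this rule with `m` and `n` swapped: the
second summand carries `n(X_r)`, so once the other factors are expanded, every term containing
`m(X_r)` is a multiple of `f(X_r) = m(X_r) n(X_r)`.
-/

theorem sub_mul_sum_antidiagonal_pow_mul_pow {R : Type*} [CommRing R] (x y : R) (j : ℕ) :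
    (x - y) * ∑ p ∈ antidiagonal j, x ^ p.1 * y ^ p.2 = x ^ (j + 1) - y ^ (j + 1) := by
  rw [Nat.sum_antidiagonal_eq_sum_range_succ_mk, ← (Commute.all x y).mul_geom_sum₂]
  simp only [Nat.add_sub_cancel]

theorem dvd_prod_add_mul_sub_prod {R ι : Type*} [CommRing R] (s : Finset ι) (a b : ι → R)
    (c : R) :
    c ∣ ∏ i ∈ s, (a i + c * b i) - ∏ i ∈ s, a i := by
  rw [← Ideal.mem_span_singleton, ← SModEq.sub_mem]
  refine SModEq.prod fun i _ => ?_
  rw [SModEq.sub_mem, add_sub_cancel_left]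
  exact Ideal.mul_mem_right _ _ (Ideal.mem_span_singleton_self c)

theorem Fin.prod_univ_erase_castSucc {M : Type*} [CommMonoid M] {n : ℕ} (l : Fin (n + 1))
    (f : Fin (n + 2) → M) :
    ∏ j ∈ univ.erase l.castSucc, f j
      = f (Fin.last (n + 1)) * ∏ j ∈ univ.erase l, f j.castSucc := by
  simp only [← filter_ne', prod_filter, Fin.prod_univ_castSucc, ne_eq, Fin.castSucc_inj,
    (Fin.castSucc_lt_last l).ne', not_false_eq_true, if_true]
  exact mul_comm _ _

section WeilOperator

variable {F σ : Type*} [Field F]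

theorem X_sub_X_mul_weilO2 (g : Polynomial F) (a b : σ) :
    (X a - X b) * weilO2 g a b = Polynomial.aeval (X a) g - Polynomial.aeval (X b) g := by
  rw [Polynomial.aeval_eq_sum_range, Polynomial.aeval_eq_sum_range, ← sum_sub_distrib,
    sum_range_succ', weilO2, mul_sum]
  simp only [pow_zero, sub_self, add_zero, smul_eq_C_mul, ← mul_sub]
  refine sum_congr rfl fun j _ => ?_
  rw [mul_left_comm, sub_mul_sum_antidiagonal_pow_mul_pow]

theorem weilO2_mul (m n : Polynomial F) {a b : σ} (hab : a ≠ b) :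
    weilO2 (m * n) a b
      = Polynomial.aeval (X a) n * weilO2 m a b + Polynomial.aeval (X b) m * weilO2 n a b := by
  have hX : (X a - X b : MvPolynomial σ F) ≠ 0 := sub_ne_zero.mpr ((X_injective (R := F)).ne hab)
  apply mul_left_cancel₀ hX
  rw [X_sub_X_mul_weilO2, map_mul, map_mul]
  linear_combination (-Polynomial.aeval (X a) n) * X_sub_X_mul_weilO2 m a b
    - Polynomial.aeval (X b) m * X_sub_X_mul_weilO2 n a b

theorem dvd_prod_weilO2_mul_sub {ι : Type*} [DecidableEq ι] (m n : Polynomial F) (x : ι → σ)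
    {r : σ} (hx : ∀ j, x j ≠ r) {S : Finset ι} {l : ι} (hl : l ∈ S) :
    Polynomial.aeval (X r) (m * n) ∣
      ∏ j ∈ S, weilO2 (m * n) (x j) r
        - (Polynomial.aeval (X (x l)) m * weilO2 n (x l) r
            * ∏ j ∈ S.erase l, weilO2 (m * n) (x j) r
          + (Polynomial.aeval (X r) n * ∏ j ∈ S.erase l, Polynomial.aeval (X (x j)) n)
            * ∏ j ∈ S, weilO2 m (x j) r) := by
  obtain ⟨q, hq⟩ := dvd_prod_add_mul_sub_prod (S.erase l)
    (fun j => Polynomial.aeval (X (x j)) n * weilO2 m (x j) r) (fun j => weilO2 n (x j) r)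
    (Polynomial.aeval (X r) m)
  simp only [← weilO2_mul m n (hx _), prod_mul_distrib] at hq
  have hsplit_l : weilO2 (m * n) (x l) r
      = Polynomial.aeval (X (x l)) m * weilO2 n (x l) r
        + Polynomial.aeval (X r) n * weilO2 m (x l) r := by
    rw [mul_comm m n, weilO2_mul n m (hx l)]
  refine ⟨weilO2 m (x l) r * q, ?_⟩
  rw [← mul_prod_erase S _ hl, ← mul_prod_erase S (fun j => weilO2 m (x j) r) hl, map_mul]
  linear_combination (Polynomial.aeval (X r) n * weilO2 m (x l) r) * hq
    + (∏ j ∈ S.erase l, weilO2 (m * n) (x j) r) * hsplit_l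

end WeilOperator

theorem weil_operator_factorization_general {F : Type*} [Field F]
    (mm nn : Polynomial F)
    (s : ℕ) (l : Fin (s + 1)) :
    (∏ j : Fin (s + 1), weilO2 (mm * nn) (Fin.castSucc j) (Fin.last (s + 1)))
      - (Polynomial.aeval (MvPolynomial.X (Fin.castSucc l) : MvPolynomial (Fin (s + 2)) F) mm
          * weilO2 nn (Fin.castSucc l) (Fin.last (s + 1))
          * ∏ j ∈ Finset.univ.erase l, weilO2 (mm * nn) (Fin.castSucc j) (Fin.last (s + 1))
        + (∏ j ∈ Finset.univ.erase (Fin.castSucc l),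
            Polynomial.aeval (MvPolynomial.X j : MvPolynomial (Fin (s + 2)) F) nn)
          * ∏ j : Fin (s + 1), weilO2 mm (Fin.castSucc j) (Fin.last (s + 1)))
      ∈ Ideal.span (Set.range fun i : Fin (s + 2) =>
          Polynomial.aeval (MvPolynomial.X i : MvPolynomial (Fin (s + 2)) F) (mm * nn)) := by
  have hdvd := dvd_prod_weilO2_mul_sub mm nn Fin.castSucc (fun j => (Fin.castSucc_lt_last j).ne)
    (mem_univ l)
  rw [Fin.prod_univ_erase_castSucc]
  exact Ideal.span_mono (Set.singleton_subset_iff.mpr (Set.mem_range_self _))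
    (Ideal.mem_span_singleton.mpr hdvd)

/-- Suppose `f = m·n` with `m, n` monic, let `r = s + 2 ≥ 2` and
`l ∈ {1,…,r-1}`.  Then, modulo the ideal of `𝔽_q[X_1,…,X_r]` generated by `f(X_1),…,f(X_r)`,
`∏_{j=1}^{r-1} O_f^{(2)}(X_j, X_r)
  ≡ m(X_l)·O_n^{(2)}(X_l, X_r)·∏_{j≠l, j<r} O_f^{(2)}(X_j, X_r)
    + (∏_{j≠l} n(X_j))·∏_{j=1}^{r-1} O_m^{(2)}(X_j, X_r)`. -/
theorem weil_operator_factorization {F : Type*} [Field F] [Fintype F]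
    (mm nn : Polynomial F) (hm : mm.Monic) (hnn : nn.Monic)
    (s : ℕ) (l : Fin (s + 1)) :
    (∏ j : Fin (s + 1), weilO2 (mm * nn) (Fin.castSucc j) (Fin.last (s + 1)))
      - (Polynomial.aeval (MvPolynomial.X (Fin.castSucc l) : MvPolynomial (Fin (s + 2)) F) mm
          * weilO2 nn (Fin.castSucc l) (Fin.last (s + 1))
          * ∏ j ∈ Finset.univ.erase l, weilO2 (mm * nn) (Fin.castSucc j) (Fin.last (s + 1))
        + (∏ j ∈ Finset.univ.erase (Fin.castSucc l),
            Polynomial.aeval (MvPolynomial.X j : MvPolynomial (Fin (s + 2)) F) nn)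
          * ∏ j : Fin (s + 1), weilO2 mm (Fin.castSucc j) (Fin.last (s + 1)))
      ∈ Ideal.span (Set.range fun i : Fin (s + 2) =>
          Polynomial.aeval (MvPolynomial.X i : MvPolynomial (Fin (s + 2)) F) (mm * nn)) :=
  weil_operator_factorization_general mm nn s l
end

section
/- Let p ∈ 𝔽_q[t] be monic irreducible of degree d, let k ≥ 1 and 0 ≤ l < k. Viewing O_{p^k}^{(2)}(x,t) and O_p^{(2)}(x,t) as polynomials in t with coefficients in 𝔽_q[x], and letting δ_l^t denote the l-th Hasse–Schmidt derivative with respect to t, one has δ_l^t(O_{p^k}^{(2)}(x,t)) ≡ p(x)^{k−l−1}·(O_p^{(2)}(x,t))^{l+1} modulo p(t); that is, p(t) divides δ_l^t(O_{p^k}^{(2)}(x,t)) − p(x)^{k−l−1}·(O_p^{(2)}(x,t))^{l+1} in 𝔽_q[x,t]. -/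
/-!
Write `u = x - t` and `P = p(t)`, so that `u · O_{p^k} = p(x)^k - P^k`. For `0 < l < k`, Leibniz
gives `δ_l (u · O) = u · δ_l O - δ_{l-1} O`, while `P ∣ δ_l (P^k)`; hence `u · δ_l O ≡ δ_{l-1} O`
and, by induction, `u^{l+1} · δ_l O_{p^k} ≡ p(x)^k (mod P)`. Likewise `u^{l+1} · O_p^{l+1} ≡
p(x)^{l+1}`, so `P` divides `u^{l+1}` times the difference in question. Swapping the variables
turns `P` into `p(x)`, which is prime, so `P` is prime, and it does not divide `u`.
-/

open Finset

/-- The rank-two Weil operator `O_g^{(2)}(x,t) = ∑_{j=1}^{deg g} b_j ∑_{α+β=j-1} x^α t^β`,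
viewed as a polynomial in `t` with coefficients in `𝔽_q[x]` (the unique polynomial with
`(x − t)·O_g^{(2)}(x,t) = g(x) − g(t)`). -/
noncomputable def weilO2xt {F : Type*} [Field F] (g : Polynomial F) :
    Polynomial (Polynomial F) :=
  ∑ j ∈ Finset.range g.natDegree,
    Polynomial.C (Polynomial.C (g.coeff (j + 1))) *
      ∑ pr ∈ Finset.HasAntidiagonal.antidiagonal j,
        (Polynomial.C Polynomial.X) ^ pr.1 * Polynomial.X ^ pr.2

open Polynomial Polynomial.Bivariate

namespace Polynomial

theorem prime_map_C {R : Type*} [CommRing R] {p : R[X]} (hp : Prime p) :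
    Prime (p.map (C : R →+* R[X])) := by
  rwa [← MulEquiv.prime_iff Bivariate.swap, Bivariate.swap_map_C, prime_C_iff]

theorem not_map_C_dvd_C_X_sub_Y {R : Type*} [CommRing R] {p : R[X]} (hp : ¬IsUnit p) :
    ¬p.map C ∣ C X - Y := by
  intro h
  replace h := _root_.map_dvd (Bivariate.swap (R := R)) h
  rw [Bivariate.swap_map_C, map_sub, Bivariate.swap_X, Bivariate.swap_Y,
    C_dvd_iff_dvd_coeff] at h
  exact hp (isUnit_of_dvd_one (by simpa [coeff_C, coeff_X] using h 1))

theorem dvd_hasseDeriv_pow {R : Type*} [CommSemiring R] (f : R[X]) {k l : ℕ} (hl : l < k) :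
    f ∣ hasseDeriv l (f ^ k) := by
  induction k generalizing l with
  | zero => exact absurd hl l.not_lt_zero
  | succ n ih =>
    rw [pow_succ, hasseDeriv_mul]
    refine Finset.dvd_sum fun ⟨i, j⟩ hij => ?_
    rw [HasAntidiagonal.mem_antidiagonal] at hij
    rcases lt_or_ge i n with hi | hi
    · exact (ih hi).mul_right _
    · obtain rfl : j = 0 := by omega
      rw [hasseDeriv_zero']
      exact dvd_mul_left f _

theorem hasseDeriv_succ_C_sub_X_mul {R : Type*} [CommRing R] (a : R) (f : R[X]) (n : ℕ) :
    hasseDeriv (n + 1) ((C a - X) * f) = (C a - X) * hasseDeriv (n + 1) f - hasseDeriv n f := by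
  rw [hasseDeriv_mul, Finset.Nat.sum_antidiagonal_eq_sum_range_succ_mk,
    Finset.sum_range_succ', Finset.sum_range_succ']
  have hasseDeriv_add_two (i : ℕ) : hasseDeriv (i + 2) (C a - X) = 0 := by
    rw [map_sub, hasseDeriv_C _ _ (by omega), hasseDeriv_X _ (by omega), sub_zero]
  have hasseDeriv_one : hasseDeriv 1 (C a - X) = -1 := by
    rw [map_sub, hasseDeriv_C _ _ one_pos, hasseDeriv_one', derivative_X, zero_sub]
  simp only [hasseDeriv_add_two, zero_mul, Finset.sum_const_zero, zero_add, hasseDeriv_one, hasseDeriv_zero',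
    Nat.sub_zero, Nat.add_sub_cancel]
  ring

theorem dvd_C_sub_X_pow_mul_hasseDeriv_sub_C {R : Type*} [CommRing R] {a c : R} {Q W : R[X]}
    {k : ℕ} (hW : (C a - X) * W = C c - Q ^ k) {l : ℕ} (hl : l < k) :
    Q ∣ (C a - X) ^ (l + 1) * hasseDeriv l W - C c := by
  induction l with
  | zero =>
    rw [zero_add, pow_one, hasseDeriv_zero', hW, sub_sub_cancel_left, dvd_neg]
    exact dvd_pow_self Q (by omega)
  | succ n ih =>
    have step : Q ∣ (C a - X) * hasseDeriv (n + 1) W - hasseDeriv n W := by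
      rw [← hasseDeriv_succ_C_sub_X_mul, hW, map_sub, hasseDeriv_C _ _ n.succ_pos, zero_sub,
        dvd_neg]
      exact dvd_hasseDeriv_pow Q hl
    convert (step.mul_left ((C a - X) ^ (n + 1))).add (ih (by omega)) using 1
    ring

end Polynomial

theorem C_X_sub_Y_mul_weilO2xt {F : Type*} [Field F] (g : F[X]) :
    (C X - Y) * weilO2xt g = C g - g.map C := by
  have geom (j : ℕ) : (C X - Y) * ∑ ij ∈ antidiagonal j, (C X : F[X][Y]) ^ ij.1 * Y ^ ij.2
      = C X ^ (j + 1) - Y ^ (j + 1) := by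
    rw [Finset.Nat.sum_antidiagonal_eq_sum_range_succ_mk, mul_comm]
    exact geom_sum₂_mul _ _ _
  have expand : C g - g.map C = ∑ j ∈ range (g.natDegree + 1),
      C (C (g.coeff j)) * (C X ^ j - Y ^ j) := by
    conv_lhs => rw [g.as_sum_range_C_mul_X_pow]
    simp only [map_sum, Polynomial.map_sum, ← Finset.sum_sub_distrib, map_mul, map_pow,
      Polynomial.map_mul, Polynomial.map_pow, map_C, map_X, mul_sub]
  rw [expand, Finset.sum_range_succ', weilO2xt, Finset.mul_sum]
  simp only [pow_zero, sub_self, mul_zero, add_zero]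
  refine Finset.sum_congr rfl fun j _ => ?_
  rw [mul_left_comm, geom]

theorem hasseDeriv_weil_operator_prime_power_general {F : Type*} [Field F]
    (p : Polynomial F) (hirr : Irreducible p)
    (k l : ℕ) (hl : l < k) :
    (p.map Polynomial.C) ∣
      (Polynomial.hasseDeriv l (weilO2xt (p ^ k))
        - Polynomial.C (p ^ (k - l - 1)) * (weilO2xt p) ^ (l + 1)) := by
  set P := p.map (C : F →+* F[X])
  have hP : Prime P := prime_map_C hirr.prime
  have hδ : P ∣ (C X - Y) ^ (l + 1) * hasseDeriv l (weilO2xt (p ^ k)) - C (p ^ k) :=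
    dvd_C_sub_X_pow_mul_hasseDeriv_sub_C
      (by rw [C_X_sub_Y_mul_weilO2xt, Polynomial.map_pow]) hl
  have hO : P ∣ (C X - Y) ^ (l + 1) * weilO2xt p ^ (l + 1) - C p ^ (l + 1) := by
    rw [← mul_pow]
    refine dvd_trans ?_ (sub_dvd_pow_sub_pow _ _ _)
    rw [C_X_sub_Y_mul_weilO2xt, sub_sub_cancel_left]
    exact dvd_neg.mpr (dvd_refl P)
  have hCk : C (p ^ k) = C (p ^ (k - l - 1)) * C p ^ (l + 1) := by
    rw [← map_pow, ← map_mul, ← pow_add, Nat.sub_sub, Nat.sub_add_cancel hl]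
  have hprod : P ∣ (C X - Y) ^ (l + 1) *
      (hasseDeriv l (weilO2xt (p ^ k)) - C (p ^ (k - l - 1)) * weilO2xt p ^ (l + 1)) := by
    convert hδ.sub (hO.mul_left (C (p ^ (k - l - 1)))) using 1
    rw [hCk]
    ring
  exact (hP.dvd_or_dvd hprod).resolve_left
    fun h => not_map_C_dvd_C_X_sub_Y hirr.not_isUnit (hP.dvd_of_dvd_pow h)

/-- Let `p ∈ 𝔽_q[t]` be monic irreducible of degree `d`, `k ≥ 1`, `0 ≤ l < k`.
Then `δ_l^t(O_{p^k}^{(2)}(x,t)) ≡ p(x)^{k-l-1}·(O_p^{(2)}(x,t))^{l+1}` modulo `p(t)`, i.e.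
`p(t)` divides `δ_l^t(O_{p^k}^{(2)}(x,t)) − p(x)^{k-l-1}·(O_p^{(2)}(x,t))^{l+1}` in
`𝔽_q[x,t]`, where `δ_l^t` is the `l`-th Hasse–Schmidt derivative with respect to `t`. -/
theorem hasseDeriv_weil_operator_prime_power {F : Type*} [Field F] [Fintype F]
    (p : Polynomial F) (hp : p.Monic) (hirr : Irreducible p) (d : ℕ) (hd : p.natDegree = d)
    (k l : ℕ) (hk : 1 ≤ k) (hl : l < k) :
    (p.map Polynomial.C) ∣
      (Polynomial.hasseDeriv l (weilO2xt (p ^ k))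
        - Polynomial.C (p ^ (k - l - 1)) * (weilO2xt p) ^ (l + 1)) :=
  hasseDeriv_weil_operator_prime_power_general p hirr k l hl
end
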